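/- arXiv:2104.10282 — 2 statements merged into one kernel-verified Lean document; each statement's English description precedes it below -/
import Mathlib

section
/- Let v ∈ ℝ^q, let (x^v, z^v) be an optimal solution of (P(v)) and let w^v be an optimal solution of (D(v)). Then: (a) if v ∉ P, then z^v ≠ 0 and w^v ≠ 0; (b) if v ∈ bd P, then z^v = 0; (c) if v ∈ int P, then z^v = 0 and w^v = 0. In particular, v ∈ P if and only if z^v = 0. -/
open Set Pointwise

noncomputable section

/-- Dot product on `Fin q → ℝ`. -/
def dotp {q : ℕ} (w y : Fin q → ℝ) : ℝ := ∑ i, w i * y i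

/-- `N` is a norm on `Fin q → ℝ`. -/
def IsNormFn {q : ℕ} (N : (Fin q → ℝ) → ℝ) : Prop :=
  (∀ z, N z = 0 ↔ z = 0) ∧ (∀ (a : ℝ) (z : Fin q → ℝ), N (a • z) = |a| * N z) ∧
    (∀ z w, N (z + w) ≤ N z + N w)

/-- Dual norm of `N`. -/
def dualNormFn {q : ℕ} (N : (Fin q → ℝ) → ℝ) (w : Fin q → ℝ) : ℝ :=
  sSup ((fun z => dotp w z) '' {z | N z ≤ 1})

/-- Distance (w.r.t. the norm `N`) from a point to a set. -/
def distFn {q : ℕ} (N : (Fin q → ℝ) → ℝ) (v : Fin q → ℝ) (A : Set (Fin q → ℝ)) : ℝ :=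
  sInf ((fun y => N (v - y)) '' A)

/-- Dual cone of a set. -/
def dualCone' {q : ℕ} (C : Set (Fin q → ℝ)) : Set (Fin q → ℝ) :=
  {w | ∀ y ∈ C, 0 ≤ dotp w y}

/-! Feasibility of `(x^v, z^v)` puts `v` in `P` when `z^v = 0`, and conversely
`‖z^v‖ = d(v, P) = 0` for `v ∈ P`; as `P` is closed this covers `bd P`. A zero dual solution would
give `d(v, P) = 0`. For `v ∈ int P`, dual optimality with `d(v, P) = 0` and `w^v ∈ C⁺` say that
`y ↦ w^vᵀy` attains its infimum over `P = Γ(X) + C` at the interior point `v`, so `w^v = 0`. -/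

open Filter Topology

theorem dotp_eq_dotProduct {q : ℕ} (w y : Fin q → ℝ) : dotp w y = w ⬝ᵥ y := rfl

namespace IsNormFn

variable {q : ℕ} {N : (Fin q → ℝ) → ℝ}

theorem nonneg (hN : IsNormFn N) (z : Fin q → ℝ) : 0 ≤ N z := by
  obtain ⟨hzero, hsmul, hadd⟩ := hN
  have hneg : N (-z) = N z := by simpa using hsmul (-1) z
  have := hadd z (-z)
  rw [add_neg_cancel, (hzero 0).mpr rfl, hneg] at this
  linarith

theorem distFn_eq_zero_of_mem (hN : IsNormFn N) {v : Fin q → ℝ} {A : Set (Fin q → ℝ)}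
    (hv : v ∈ A) : distFn N v A = 0 := by
  have hmem : (0 : ℝ) ∈ (fun y => N (v - y)) '' A := ⟨v, hv, by simp [(hN.1 0).mpr rfl]⟩
  have hlb : (0 : ℝ) ∈ lowerBounds ((fun y => N (v - y)) '' A) := by
    rintro _ ⟨y, -, rfl⟩
    exact hN.nonneg _
  exact le_antisymm (csInf_le ⟨0, hlb⟩ hmem) (le_csInf ⟨0, hmem⟩ hlb)

end IsNormFn

theorem eq_zero_of_dotProduct_le_of_mem_interior {ι : Type*} [Fintype ι] {S : Set (ι → ℝ)}
    {v w : ι → ℝ} (hv : v ∈ interior S) (hmin : ∀ y ∈ S, w ⬝ᵥ v ≤ w ⬝ᵥ y) : w = 0 := by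
  have hpath : Tendsto (fun t : ℝ => v - t • w) (𝓝[>] 0) (𝓝 v) := by
    have : Continuous fun t : ℝ => v - t • w := by fun_prop
    simpa using this.tendsto' 0 _ (by simp) |>.mono_left nhdsWithin_le_nhds
  obtain ⟨t, htS, ht⟩ :=
    ((hpath.eventually (mem_interior_iff_mem_nhds.mp hv)).and self_mem_nhdsWithin).exists
  have hstep := hmin _ htS
  rw [dotProduct_sub, dotProduct_smul, smul_eq_mul] at hstep
  have hww : w ⬝ᵥ w ≤ 0 := nonpos_of_mul_nonpos_right (by linarith) ht
  exact dotProduct_self_eq_zero.mp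
    (le_antisymm hww (Finset.sum_nonneg fun i _ => mul_self_nonneg (w i)))

theorem sInf_image_dotp_le_of_mem_add {α : Type*} {q : ℕ} {X : Set α} {Γ : α → Fin q → ℝ}
    {C : Set (Fin q → ℝ)} {w y : Fin q → ℝ} (hbdd : BddBelow ((fun x => dotp w (Γ x)) '' X))
    (hw : w ∈ dualCone' C) (hy : y ∈ Γ '' X + C) :
    sInf ((fun x => dotp w (Γ x)) '' X) ≤ dotp w y := by
  obtain ⟨_, ⟨x, hx, rfl⟩, c, hc, rfl⟩ := hy
  have hΓx := csInf_le hbdd (mem_image_of_mem _ hx)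
  have hcpos := hw c hc
  simp only [dotp_eq_dotProduct, dotProduct_add] at *
  linarith

theorem stmt5_general {q n : ℕ}
    (N : (Fin q → ℝ) → ℝ) (hN : IsNormFn N)
    (C : Set (Fin q → ℝ))
    (hCclosed : IsClosed C)
    (X : Set (Fin n → ℝ)) (hX : IsCompact X)
    (Γ : (Fin n → ℝ) → (Fin q → ℝ)) (hΓ : ContinuousOn Γ X)
    (v : Fin q → ℝ) (xv : Fin n → ℝ) (zv : Fin q → ℝ) (wv : Fin q → ℝ)
    (hxv : xv ∈ X) (hfeas : v + zv - Γ xv ∈ C)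
    (hzopt : N zv = distFn N v (Γ '' X + C))
    (hwv : wv ∈ dualCone' C)
    (hwopt : sInf ((fun x => dotp wv (Γ x)) '' X) - dotp wv v
      = distFn N v (Γ '' X + C)) :
    (v ∉ Γ '' X + C → zv ≠ 0 ∧ wv ≠ 0) ∧
    (v ∈ frontier (Γ '' X + C) → zv = 0) ∧
    (v ∈ interior (Γ '' X + C) → zv = 0 ∧ wv = 0) ∧
    (v ∈ Γ '' X + C ↔ zv = 0) := by
  have hPclosed : IsClosed (Γ '' X + C) :=
    hCclosed.add_left_of_isCompact (hX.image_of_continuousOn hΓ)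
  have hmem_iff : v ∈ Γ '' X + C ↔ zv = 0 := by
    refine ⟨fun hv => (hN.1 zv).mp (hzopt.trans (hN.distFn_eq_zero_of_mem hv)), fun hz => ?_⟩
    exact ⟨Γ xv, mem_image_of_mem Γ hxv, v - Γ xv, by simpa [hz] using hfeas, add_sub_cancel _ _⟩
  have hmem_of_wv : wv = 0 → v ∈ Γ '' X + C := by
    rintro rfl
    have hconst : (fun x => dotp 0 (Γ x)) '' X = {0} := by
      simpa [dotp] using (nonempty_of_mem hxv).image_const 0
    rw [hconst, csInf_singleton, dotp_eq_dotProduct, zero_dotProduct, sub_zero,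
      ← hzopt, eq_comm, hN.1] at hwopt
    exact hmem_iff.mpr hwopt
  refine ⟨fun hv => ⟨mt hmem_iff.mpr hv, mt hmem_of_wv hv⟩,
    fun hv => hmem_iff.mp (hPclosed.frontier_subset hv), fun hv => ⟨?_, ?_⟩, hmem_iff⟩
  · exact hmem_iff.mp (interior_subset hv)
  · have hbdd : BddBelow ((fun x => dotp wv (Γ x)) '' X) :=
      (hX.image_of_continuousOn
        ((continuous_const.dotProduct continuous_id).comp_continuousOn hΓ)).bddBelow
    rw [hN.distFn_eq_zero_of_mem (interior_subset hv), sub_eq_zero] at hwopt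
    exact eq_zero_of_dotProduct_le_of_mem_interior hv fun y hy =>
      (hwopt ▸ sInf_image_dotp_le_of_mem_add hbdd hwv hy : dotp wv v ≤ dotp wv y)

/-- characterization of the cases `zv = 0` for optimal solutions of
(P(v)) and (D(v)). -/
theorem stmt5 {q n : ℕ}
    (N : (Fin q → ℝ) → ℝ) (hN : IsNormFn N)
    (C : Set (Fin q → ℝ))
    (hCclosed : IsClosed C) (hCconv : Convex ℝ C)
    (hCcone : ∀ t : ℝ, 0 ≤ t → ∀ y ∈ C, t • y ∈ C)
    (hCsolid : (interior C).Nonempty)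
    (hCpointed : ∀ y ∈ C, -y ∈ C → y = 0)
    (hCnontriv : {(0 : Fin q → ℝ)} ⊂ C ∧ C ⊂ Set.univ)
    (X : Set (Fin n → ℝ)) (hX : IsCompact X) (hXconv : Convex ℝ X)
    (hXint : (interior X).Nonempty)
    (Γ : (Fin n → ℝ) → (Fin q → ℝ)) (hΓ : ContinuousOn Γ X)
    (hΓconv : ∀ x₁ ∈ X, ∀ x₂ ∈ X, ∀ t : ℝ, t ∈ Icc (0:ℝ) 1 →
      t • Γ x₁ + (1 - t) • Γ x₂ - Γ (t • x₁ + (1 - t) • x₂) ∈ C)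
    (v : Fin q → ℝ) (xv : Fin n → ℝ) (zv : Fin q → ℝ) (wv : Fin q → ℝ)
    (hxv : xv ∈ X) (hfeas : v + zv - Γ xv ∈ C)
    (hzopt : N zv = distFn N v (Γ '' X + C))
    (hwv : wv ∈ dualCone' C) (hwnorm : dualNormFn N wv ≤ 1)
    (hwopt : sInf ((fun x => dotp wv (Γ x)) '' X) - dotp wv v
      = distFn N v (Γ '' X + C)) :
    (v ∉ Γ '' X + C → zv ≠ 0 ∧ wv ≠ 0) ∧
    (v ∈ frontier (Γ '' X + C) → zv = 0) ∧
    (v ∈ interior (Γ '' X + C) → zv = 0 ∧ wv = 0) ∧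
    (v ∈ Γ '' X + C ↔ zv = 0) :=
  stmt5_general N hN C hCclosed X hX Γ hΓ v xv zv wv hxv hfeas hzopt hwv hwopt
end
end

section
/- Let v ∈ ℝ^q, let (x^v, z^v) be an optimal solution of (P(v)) and let w^v be an optimal solution of (D(v)) with w^v ≠ 0. Then the halfspace H := {y ∈ ℝ^q : (w^v)ᵀy ≥ (w^v)ᵀΓ(x^v)} contains the upper image P; moreover bd H supports P both at Γ(x^v) and at y^v := v + z^v, and in particular (w^v)ᵀΓ(x^v) = (w^v)ᵀ(v + z^v). -/
/-!
Weak duality along the primal solution: since `w ∈ C⁺` and `v + z - Γ x ∈ C`,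
`wᵀ Γ x ≤ wᵀ (v + z) = wᵀ v + wᵀ z ≤ wᵀ v + ‖w‖_* ‖z‖ ≤ wᵀ v + d(v, P) = inf_X wᵀ Γ`,
the last step being dual optimality. Hence all these inequalities are equalities and `Γ x`
minimises `wᵀ` over `Γ(X)`, so also over `P = Γ(X) + C`. The only analytic input is that the
dual norm is a genuine supremum, i.e. that the unit ball of `N` is bounded, which holds
because all norms on `ℝ^q` are equivalent.
-/

open Set Pointwise

noncomputable section

namespace IsNormFn

variable {q : ℕ} {N : (Fin q → ℝ) → ℝ}

def toSeminorm (hN : IsNormFn N) : Seminorm ℝ (Fin q → ℝ) :=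
  Seminorm.of N hN.2.2 fun a z => by rw [hN.2.1, Real.norm_eq_abs]

lemma map_zero (hN : IsNormFn N) : N 0 = 0 := (hN.1 0).2 rfl

lemma pos (hN : IsNormFn N) {z : Fin q → ℝ} (hz : z ≠ 0) : 0 < N z :=
  (apply_nonneg hN.toSeminorm z).lt_of_ne fun h => hz ((hN.1 z).1 h.symm)

lemma continuous (hN : IsNormFn N) : Continuous N :=
  continuousOn_univ.1 (hN.toSeminorm.convexOn.continuousOn isOpen_univ)

/-- The minimum of `N` over the unit sphere of the sup norm is the equivalence constant. -/
lemma exists_pos_mul_norm_le (hN : IsNormFn N) : ∃ c > 0, ∀ z, c * ‖z‖ ≤ N z := by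
  obtain ⟨c, hc, hmin⟩ := (isCompact_sphere (0 : Fin q → ℝ) 1).exists_forall_le'
    hN.continuous.continuousOn fun z hz => hN.pos (ne_zero_of_mem_unit_sphere ⟨z, hz⟩)
  refine ⟨c, hc, fun z => ?_⟩
  rcases eq_or_ne z 0 with rfl | hz
  · simp [hN.map_zero]
  have hnz : 0 < ‖z‖ := norm_pos_iff.2 hz
  have h := hmin (‖z‖⁻¹ • z) (by simp [norm_smul, hnz.ne'])
  rw [hN.2.1, abs_of_pos (inv_pos.2 hnz)] at h
  rwa [← le_div_iff₀ hnz, div_eq_inv_mul]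

lemma isCompact_unitBall (hN : IsNormFn N) : IsCompact {z | N z ≤ 1} := by
  obtain ⟨c, hc, hle⟩ := hN.exists_pos_mul_norm_le
  refine Metric.isCompact_of_isClosed_isBounded (isClosed_le hN.continuous continuous_const)
    ((Metric.isBounded_closedBall (x := 0) (r := c⁻¹)).subset fun z hz => ?_)
  rw [mem_closedBall_zero_iff, ← one_div, le_div_iff₀' hc]
  exact (hle z).trans hz

end IsNormFn

section dotp

variable {q : ℕ}

lemma continuous_dotp (w : Fin q → ℝ) : Continuous (dotp w) := by
  unfold dotp; fun_prop

lemma dotp_add (w a b : Fin q → ℝ) : dotp w (a + b) = dotp w a + dotp w b := dotProduct_add w a b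

lemma dotp_sub (w a b : Fin q → ℝ) : dotp w (a - b) = dotp w a - dotp w b := dotProduct_sub w a b

lemma dotp_smul (w : Fin q → ℝ) (t : ℝ) (a : Fin q → ℝ) : dotp w (t • a) = t * dotp w a :=
  dotProduct_smul t w a

lemma dotp_le_dotp_of_sub_mem {C : Set (Fin q → ℝ)} {w x y : Fin q → ℝ} (hw : w ∈ dualCone' C)
    (h : y - x ∈ C) : dotp w x ≤ dotp w y :=
  sub_nonneg.1 (dotp_sub w y x ▸ hw _ h)

lemma IsNormFn.dotp_le_dualNormFn_mul {N : (Fin q → ℝ) → ℝ} (hN : IsNormFn N)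
    (w z : Fin q → ℝ) : dotp w z ≤ dualNormFn N w * N z := by
  rcases eq_or_ne z 0 with rfl | hz
  · simp [dotp, hN.map_zero]
  have hNz := hN.pos hz
  have hunit : N ((N z)⁻¹ • z) ≤ 1 := by
    rw [hN.2.1, abs_of_pos (inv_pos.2 hNz), inv_mul_cancel₀ hNz.ne']
  have h : dotp w ((N z)⁻¹ • z) ≤ dualNormFn N w :=
    le_csSup (hN.isCompact_unitBall.image (continuous_dotp w)).bddAbove ⟨_, hunit, rfl⟩
  rwa [dotp_smul, inv_mul_le_iff₀ hNz, mul_comm] at h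

end dotp

theorem stmt7_general {q n : ℕ}
    (N : (Fin q → ℝ) → ℝ) (hN : IsNormFn N)
    (C : Set (Fin q → ℝ))
    (hCcone : ∀ t : ℝ, 0 ≤ t → ∀ y ∈ C, t • y ∈ C)
    (X : Set (Fin n → ℝ)) (hX : IsCompact X)
    (Γ : (Fin n → ℝ) → (Fin q → ℝ)) (hΓ : ContinuousOn Γ X)
    (v : Fin q → ℝ) (xv : Fin n → ℝ) (zv : Fin q → ℝ) (wv : Fin q → ℝ)
    (hxv : xv ∈ X) (hfeas : v + zv - Γ xv ∈ C)
    (hzopt : N zv = distFn N v (Γ '' X + C))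
    (hwv : wv ∈ dualCone' C) (hwnorm : dualNormFn N wv ≤ 1)
    (hwopt : sInf ((fun x => dotp wv (Γ x)) '' X) - dotp wv v
      = distFn N v (Γ '' X + C)) :
    Γ '' X + C ⊆ {y | dotp wv (Γ xv) ≤ dotp wv y} ∧
    Γ xv ∈ Γ '' X + C ∧
    v + zv ∈ Γ '' X + C ∧
    dotp wv (Γ xv) = dotp wv (v + zv) := by
  have h0C : (0 : Fin q → ℝ) ∈ C := by simpa using hCcone 0 le_rfl _ hfeas
  have hbdd : BddBelow ((fun x => dotp wv (Γ x)) '' X) :=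
    (hX.image_of_continuousOn ((continuous_dotp wv).comp_continuousOn hΓ)).bddBelow
  have hlow : dotp wv (v + zv) ≤ sInf ((fun x => dotp wv (Γ x)) '' X) := by
    have hzv : dotp wv zv ≤ N zv := (hN.dotp_le_dualNormFn_mul wv zv).trans
      (mul_le_of_le_one_left (apply_nonneg hN.toSeminorm zv) hwnorm)
    rw [dotp_add]
    linarith
  have hmin : ∀ x ∈ X, dotp wv (v + zv) ≤ dotp wv (Γ x) := fun x hx =>
    hlow.trans (csInf_le hbdd ⟨x, hx, rfl⟩)
  have heq : dotp wv (Γ xv) = dotp wv (v + zv) :=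
    le_antisymm (dotp_le_dotp_of_sub_mem hwv hfeas) (hmin xv hxv)
  refine ⟨?_, by simpa using add_mem_add (mem_image_of_mem Γ hxv) h0C,
    by simpa using add_mem_add (mem_image_of_mem Γ hxv) hfeas, heq⟩
  rintro _ ⟨_, ⟨x, hx, rfl⟩, c, hc, rfl⟩
  exact heq.trans_le ((hmin x hx).trans (dotp_le_dotp_of_sub_mem hwv (by simpa using hc)))

/-- the halfspace `H = {y : (wv)ᵀ y ≥ (wv)ᵀ Γ(xv)}` contains the upper
image `P` and its boundary hyperplane supports `P` both at `Γ(xv)` and at `v + zv`. -/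
theorem stmt7 {q n : ℕ}
    (N : (Fin q → ℝ) → ℝ) (hN : IsNormFn N)
    (C : Set (Fin q → ℝ))
    (hCclosed : IsClosed C) (hCconv : Convex ℝ C)
    (hCcone : ∀ t : ℝ, 0 ≤ t → ∀ y ∈ C, t • y ∈ C)
    (hCsolid : (interior C).Nonempty)
    (hCpointed : ∀ y ∈ C, -y ∈ C → y = 0)
    (hCnontriv : {(0 : Fin q → ℝ)} ⊂ C ∧ C ⊂ Set.univ)
    (X : Set (Fin n → ℝ)) (hX : IsCompact X) (hXconv : Convex ℝ X)
    (hXint : (interior X).Nonempty)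
    (Γ : (Fin n → ℝ) → (Fin q → ℝ)) (hΓ : ContinuousOn Γ X)
    (hΓconv : ∀ x₁ ∈ X, ∀ x₂ ∈ X, ∀ t : ℝ, t ∈ Icc (0:ℝ) 1 →
      t • Γ x₁ + (1 - t) • Γ x₂ - Γ (t • x₁ + (1 - t) • x₂) ∈ C)
    (v : Fin q → ℝ) (xv : Fin n → ℝ) (zv : Fin q → ℝ) (wv : Fin q → ℝ)
    (hxv : xv ∈ X) (hfeas : v + zv - Γ xv ∈ C)
    (hzopt : N zv = distFn N v (Γ '' X + C))
    (hwv : wv ∈ dualCone' C) (hwnorm : dualNormFn N wv ≤ 1)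
    (hwopt : sInf ((fun x => dotp wv (Γ x)) '' X) - dotp wv v
      = distFn N v (Γ '' X + C))
    (hwv0 : wv ≠ 0) :
    Γ '' X + C ⊆ {y | dotp wv (Γ xv) ≤ dotp wv y} ∧
    Γ xv ∈ Γ '' X + C ∧
    v + zv ∈ Γ '' X + C ∧
    dotp wv (Γ xv) = dotp wv (v + zv) :=
  stmt7_general N hN C hCcone X hX Γ hΓ v xv zv wv hxv hfeas hzopt hwv hwnorm hwopt
end
end
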